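/- (Shafarevich–Tate) Let F₀ be a finite field of characteristic p and let F be the quadratic extension of F₀. Let ψ_p be a nontrivial additive character of F_p and set ψ(x) = ψ_p(Tr_{F/F_p}(x)). Let χ be a nontrivial multiplicative character of F whose restriction to F₀^× is trivial. Then for every x ∈ F^× with Tr_{F/F₀}(x) = 0, one has Σ_{t∈F^×} χ(t)ψ(t) = χ(x)·|F₀|. -/

import Mathlib

/-!
Twisting `ψ` by `algebraMap u` for `u ∈ F₀ˣ` does not change the Gauss sum `G` of `χ` and `ψ`,
because `χ` is trivial on `F₀ˣ`. Averaging over all `u ∈ F₀` (the term `u = 0` is `∑ χ = 0`) and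
using `ψ (u t) = ψ₀ (u · Tr_{F/F₀} t)` with `ψ₀` a nontrivial character of `F₀`, orthogonality gives
`(q - 1) G = q ∑_{Tr t = 0} χ t`. In the quadratic case the trace-zero elements form the line
`F₀ x`, on which `χ (c x) = χ x` for `c ≠ 0`, so the right-hand side is `q (q - 1) χ x`.
-/

open Finset

lemma Fintype.sum_eq_add_sum_units {G₀ M : Type*} [GroupWithZero G₀] [Fintype G₀] [DecidableEq G₀]
    [AddCommMonoid M] (f : G₀ → M) : ∑ a, f a = f 0 + ∑ u : G₀ˣ, f u := by
  rw [← Finset.add_sum_erase _ f (mem_univ 0), Finset.sum_subtype _ (p := (· ≠ 0)) (by simp)]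
  exact congrArg _ (Fintype.sum_equiv unitsEquivNeZero _ _ fun _ => rfl).symm

lemma AddChar.compAddMonoidHom_ne_one {A B M : Type*} [AddMonoid A] [AddMonoid B] [Monoid M]
    {f : A →+ B} (hf : Function.Surjective f) {ψ : AddChar B M} (hψ : ψ ≠ 1) :
    ψ.compAddMonoidHom f ≠ 1 := fun h =>
  hψ (AddChar.compAddMonoidHom_injective_left f hf (h.trans rfl))

lemma LinearMap.sum_filter_eq_zero_eq_sum_smul {K V M : Type*} [Field K] [Fintype K]
    [DecidableEq K] [AddCommGroup V] [Module K V] [Fintype V] [DecidableEq V] [AddCommMonoid M]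
    {f : V →ₗ[K] K} (hf : Function.Surjective f) (hV : Module.finrank K V = 2)
    {x : V} (hx : x ≠ 0) (hfx : f x = 0) (g : V → M) :
    ∑ t with f t = 0, g t = ∑ c : K, g (c • x) := by
  have hker : LinearMap.ker f = K ∙ x := by
    have hrank := f.finrank_range_add_finrank_ker
    rw [LinearMap.range_eq_top.2 hf, finrank_top, Module.finrank_self, hV] at hrank
    refine (Submodule.eq_of_le_of_finrank_le ((Submodule.span_singleton_le_iff_mem _ _).2 hfx)
      ?_).symm
    rw [finrank_span_singleton hx]
    omega
  have hfilter : ({t | f t = 0} : Finset V) = univ.image fun c : K => c • x := by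
    ext t
    simp only [mem_filter, mem_univ, true_and, mem_image, ← LinearMap.mem_ker, hker,
      Submodule.mem_span_singleton]
  rw [hfilter, sum_image fun a _ b _ hab => smul_left_injective K hx hab]

lemma MulChar.sum_smul_eq_card_units_mul {L K R : Type*} [Field L] [Fintype L] [DecidableEq L]
    [CommRing K] [Nontrivial K] [Algebra L K] [CommSemiring R] {χ : MulChar K R}
    (hres : ∀ u : Lˣ, χ (algebraMap L K u) = 1) (x : K) :
    ∑ c : L, χ (c • x) = Fintype.card Lˣ * χ x := by
  simp [Fintype.sum_eq_add_sum_units, Algebra.smul_def, hres]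

theorem card_units_mul_gaussSum_trace {L K R : Type*} [Field L] [Fintype L] [DecidableEq L]
    [Field K] [Fintype K] [DecidableEq K] [Algebra L K] [CommRing R] [IsDomain R]
    {χ : MulChar K R} (hχ : χ ≠ 1) (hres : ∀ u : Lˣ, χ (algebraMap L K u) = 1)
    {ψ : AddChar L R} (hψ : ψ ≠ 1) :
    Fintype.card Lˣ * gaussSum χ (ψ.compAddMonoidHom (Algebra.trace L K).toAddMonoidHom) =
      Fintype.card L * ∑ t with Algebra.trace L K t = 0, χ t := by
  set ψK := ψ.compAddMonoidHom (Algebra.trace L K).toAddMonoidHom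
  have shift (u : Lˣ) : gaussSum χ (ψK.mulShift (algebraMap L K u)) = gaussSum χ ψK := by
    simpa [hres u] using gaussSum_mulShift χ ψK (Units.map (algebraMap L K) u)
  have orthogonality (t : K) : ∑ u : L, ψK.mulShift (algebraMap L K u) t =
      if Algebra.trace L K t = 0 then (Fintype.card L : R) else 0 := by
    simp only [AddChar.mulShift_apply, ← Algebra.smul_def, ψK, AddChar.compAddMonoidHom_apply,
      LinearMap.toAddMonoidHom_coe, map_smul, smul_eq_mul]
    rw [AddChar.sum_mulShift _ (AddChar.IsPrimitive.of_ne_one hψ), Nat.cast_ite, Nat.cast_zero]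
  calc (Fintype.card Lˣ : R) * gaussSum χ ψK
      = ∑ u : Lˣ, gaussSum χ (ψK.mulShift (algebraMap L K u)) := by simp [shift]
    _ = ∑ u : L, gaussSum χ (ψK.mulShift (algebraMap L K u)) := by
      rw [Fintype.sum_eq_add_sum_units (fun u : L => gaussSum χ (ψK.mulShift (algebraMap L K u)))]
      simp [gaussSum, AddChar.mulShift_zero, MulChar.sum_eq_zero_of_ne_one hχ]
    _ = ∑ t, χ t * ∑ u : L, ψK.mulShift (algebraMap L K u) t := by
      simp only [gaussSum, mul_sum]
      exact sum_comm
    _ = Fintype.card L * ∑ t with Algebra.trace L K t = 0, χ t := by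
      simp only [orthogonality, mul_ite, mul_zero, sum_filter, mul_sum]
      exact sum_congr rfl fun t _ => by split_ifs <;> ring

attribute [local instance] ZMod.algebra

/-- (Shafarevich–Tate) Let `F` be the quadratic extension of a finite field `F₀` of
characteristic `p`, let `ψ(x) = ψ_p(Tr_{F/F_p}(x))` for a nontrivial additive character `ψ_p`
of `F_p`, and let `χ` be a nontrivial multiplicative character of `F` whose restriction to
`F₀^×` is trivial.  Then for every `x ∈ F^×` with `Tr_{F/F₀}(x) = 0` one has
`∑_{t ∈ F^×} χ(t)ψ(t) = χ(x)·|F₀|`. -/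
theorem stmt7 (p : ℕ) [Fact p.Prime]
    (F₀ F : Type*) [Field F₀] [Fintype F₀] [Field F] [Fintype F] [DecidableEq F]
    [CharP F p] [Algebra F₀ F] (hquad : Module.finrank F₀ F = 2)
    (ψp : AddChar (ZMod p) ℂ) (hψ : ψp ≠ 1)
    (χ : MulChar F ℂ) (hχ : χ ≠ 1)
    (hres : ∀ y : F₀ˣ, χ (algebraMap F₀ F y) = 1)
    (x : F) (hx : x ≠ 0) (htr : Algebra.trace F₀ F x = 0) :
    ∑ t : Fˣ, χ t * ψp (Algebra.trace (ZMod p) F t) = χ x * (Fintype.card F₀ : ℂ) := by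
  classical
  have : CharP F₀ p := (Algebra.charP_iff F₀ F p).2 ‹_›
  have : IsScalarTower (ZMod p) F₀ F := .of_algebraMap_eq' (RingHom.ext_zmod _ _)
  set ψ₀ : AddChar F₀ ℂ := ψp.compAddMonoidHom (Algebra.trace (ZMod p) F₀).toAddMonoidHom
  have hψ₀ : ψ₀ ≠ 1 := AddChar.compAddMonoidHom_ne_one (Algebra.trace_surjective _ _) hψ
  have hgauss : ∑ t : Fˣ, χ t * ψp (Algebra.trace (ZMod p) F t) =
      gaussSum χ (ψ₀.compAddMonoidHom (Algebra.trace F₀ F).toAddMonoidHom) := by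
    simp [gaussSum, Fintype.sum_eq_add_sum_units, MulChar.map_zero, ψ₀]
  have key := card_units_mul_gaussSum_trace hχ hres hψ₀
  rw [LinearMap.sum_filter_eq_zero_eq_sum_smul (Algebra.trace_surjective F₀ F) hquad hx htr,
    MulChar.sum_smul_eq_card_units_mul hres] at key
  rw [hgauss]
  refine mul_left_cancel₀ (Nat.cast_ne_zero.2 Fintype.card_ne_zero) (key.trans ?_)
  ring
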